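/- General local order bound for the Gaussian spin-glass model: for any two subsets A, B ⊆ Λ with Ξ_A > 0 and Ξ_B > 0, and any β > 0, E[ω_{A·B}²] ≥ 1 − (1/Ξ_A + 1/Ξ_B)·√(2/π)·(1/β) − (1/(√(2π)·Ξ_A²·Ξ_B))·(1/β³), where A·B = (A ∪ B) ∖ (A ∩ B) is the symmetric difference; the bound is independent of the volume of Λ and of the distance between A and B. -/

import Mathlib

open MeasureTheory ProbabilityTheory Real
open scoped NNReal BigOperators

noncomputable section

/-- The real value of a spin encoded as a Boolean: `true ↦ +1`, `false ↦ -1`. -/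
def spinVal (b : Bool) : ℝ := if b then 1 else -1

variable {ι : Type*} [Fintype ι] [DecidableEq ι]

/-- `σ_A = ∏_{i ∈ A} σ_i`, the product of the spins in the set `A`. -/
def sigmaSet (A : Finset ι) (σ : ι → Bool) : ℝ := ∏ i ∈ A, spinVal (σ i)

/-- The general Gaussian spin-glass Hamiltonian `H(σ) = -∑_{A ⊆ Λ} J_A σ_A` on the
finite set of sites `ι` (the couplings `J` are indexed by all subsets of `ι`). -/
def glassH (J : Finset ι → ℝ) (σ : ι → Bool) : ℝ := -∑ A : Finset ι, J A * sigmaSet A σ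

/-- The Boltzmann-Gibbs expectation `ω(f)` at inverse temperature `β` for the
couplings `J`. -/
def gibbs (β : ℝ) (J : Finset ι → ℝ) (f : (ι → Bool) → ℝ) : ℝ :=
  (∑ σ : ι → Bool, f σ * Real.exp (-β * glassH J σ)) /
    (∑ σ : ι → Bool, Real.exp (-β * glassH J σ))

/-- `ω_A = ω(σ_A)`, the Gibbs expectation of `σ_A`. -/
def omegaSet (β : ℝ) (J : Finset ι → ℝ) (A : Finset ι) : ℝ := gibbs β J (sigmaSet A)

/-- The hypothesis that the couplings `J : Ω → Finset ι → ℝ` form an independent family of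
centered Gaussian random variables with variances `E[J_A²] = Ξ_A²`. -/
structure IsGaussianCouplings {Ω : Type*} [MeasurableSpace Ω] (μ : Measure Ω)
    (J : Ω → Finset ι → ℝ) (Ξ : Finset ι → ℝ≥0) : Prop where
  isProb : IsProbabilityMeasure μ
  meas : ∀ A : Finset ι, Measurable fun ω => J ω A
  law : ∀ A : Finset ι, Measure.map (fun ω => J ω A) μ = gaussianReal 0 (Ξ A ^ 2)
  indep : iIndepFun (m := fun _ : Finset ι => Real.measurableSpace) (fun A ω => J ω A) μ


/-! ### Auxiliary lemmas -/

section Aux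

set_option linter.unusedSectionVars false

open Filter
open scoped ENNReal Topology

lemma spinVal_eq_or (b : Bool) : spinVal b = 1 ∨ spinVal b = -1 := by
  cases b <;> simp [spinVal]

lemma sigmaSet_eq_or (A : Finset ι) (σ : ι → Bool) :
    sigmaSet A σ = 1 ∨ sigmaSet A σ = -1 := by
  classical
  unfold sigmaSet
  refine Finset.prod_induction _ (fun x => x = 1 ∨ x = -1) ?_ (Or.inl rfl) ?_
  · rintro a b (ha | ha) (hb | hb) <;> simp [ha, hb]
  · intro i _; exact spinVal_eq_or _

lemma sigmaSet_symmDiff (A B : Finset ι) (σ : ι → Bool) :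
    sigmaSet ((A ∪ B) \ (A ∩ B)) σ = sigmaSet A σ * sigmaSet B σ := by
  classical
  have h1 : (A ∪ B) \ (A ∩ B) = (A \ B) ∪ (B \ A) := by
    ext i; simp [Finset.mem_sdiff, Finset.mem_union, Finset.mem_inter]; tauto
  have hd : Disjoint (A \ B) (B \ A) := by
    rw [Finset.disjoint_left]; intro a ha hb
    simp only [Finset.mem_sdiff] at ha hb; exact hb.2 ha.1
  have hA : A = (A \ B) ∪ (A ∩ B) := by
    ext i; simp [Finset.mem_sdiff, Finset.mem_union, Finset.mem_inter]; tauto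
  have hB : B = (B \ A) ∪ (A ∩ B) := by
    ext i; simp [Finset.mem_sdiff, Finset.mem_union, Finset.mem_inter]; tauto
  have hdA : Disjoint (A \ B) (A ∩ B) := by
    rw [Finset.disjoint_left]; intro a ha hb
    simp only [Finset.mem_sdiff, Finset.mem_inter] at ha hb; exact ha.2 hb.2
  have hdB : Disjoint (B \ A) (A ∩ B) := by
    rw [Finset.disjoint_left]; intro a ha hb
    simp only [Finset.mem_sdiff, Finset.mem_inter] at ha hb; exact ha.2 hb.1
  unfold sigmaSet
  have eA : (∏ i ∈ A, spinVal (σ i)) = (∏ i ∈ A \ B, spinVal (σ i)) * ∏ i ∈ A ∩ B, spinVal (σ i) := by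
    conv_lhs => rw [hA]
    exact Finset.prod_union hdA
  have eB : (∏ i ∈ B, spinVal (σ i)) = (∏ i ∈ B \ A, spinVal (σ i)) * ∏ i ∈ A ∩ B, spinVal (σ i) := by
    conv_lhs => rw [hB]
    exact Finset.prod_union hdB
  rw [h1, Finset.prod_union hd, eA, eB]
  have hsq : (∏ i ∈ A ∩ B, spinVal (σ i)) ^ 2 = 1 := by
    rw [sq, ← Finset.prod_mul_distrib]
    refine Finset.prod_eq_one fun i _ => ?_
    rcases spinVal_eq_or (σ i) with h | h <;> simp [h]
  linear_combination (-((∏ i ∈ A \ B, spinVal (σ i)) * ∏ i ∈ B \ A, spinVal (σ i))) * hsq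

lemma gibbsZ_pos (β : ℝ) (J : Finset ι → ℝ) :
    0 < ∑ σ : ι → Bool, Real.exp (-β * glassH J σ) :=
  Finset.sum_pos (fun σ _ => Real.exp_pos _) Finset.univ_nonempty

lemma abs_omegaSet_le_one (β : ℝ) (J : Finset ι → ℝ) (A : Finset ι) :
    |omegaSet β J A| ≤ 1 := by
  have hZ := gibbsZ_pos β J
  rw [omegaSet, gibbs, abs_div, abs_of_pos hZ, div_le_one hZ]
  calc |∑ σ : ι → Bool, sigmaSet A σ * Real.exp (-β * glassH J σ)|
      ≤ ∑ σ : ι → Bool, |sigmaSet A σ * Real.exp (-β * glassH J σ)| :=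
        Finset.abs_sum_le_sum_abs _ _
    _ ≤ ∑ σ : ι → Bool, Real.exp (-β * glassH J σ) := by
        refine Finset.sum_le_sum fun σ _ => ?_
        rw [abs_mul, abs_of_pos (Real.exp_pos _)]
        rcases sigmaSet_eq_or A σ with h | h <;> simp [h]

/-- The key pointwise inequality `1 - ω_{A·B}² ≤ (1 - ω_A²) + (1 - ω_B²)`,
valid for every realization of the couplings. -/
lemma pointwise_bound (β : ℝ) (J : Finset ι → ℝ) (A B : Finset ι) :
    1 - omegaSet β J ((A ∪ B) \ (A ∩ B)) ^ 2 ≤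
      (1 - omegaSet β J A ^ 2) + (1 - omegaSet β J B ^ 2) := by
  classical
  set W : (ι → Bool) → ℝ := fun σ => Real.exp (-β * glassH J σ) with hW
  have hWpos : ∀ σ, 0 < W σ := fun σ => Real.exp_pos _
  set Z := ∑ σ : ι → Bool, W σ with hZdef
  have hZ : 0 < Z := Finset.sum_pos (fun σ _ => hWpos σ) Finset.univ_nonempty
  set Sa := ∑ σ : ι → Bool, sigmaSet A σ * W σ with hSa
  set Sb := ∑ σ : ι → Bool, sigmaSet B σ * W σ with hSb
  set Sc := ∑ σ : ι → Bool, sigmaSet A σ * sigmaSet B σ * W σ with hSc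
  have hOA : omegaSet β J A = Sa / Z := rfl
  have hOB : omegaSet β J B = Sb / Z := rfl
  have hOC : omegaSet β J ((A ∪ B) \ (A ∩ B)) = Sc / Z := by
    rw [omegaSet, gibbs]
    congr 1
    exact Finset.sum_congr rfl fun σ _ => by rw [sigmaSet_symmDiff]
  have habs : ∀ ε : ℝ, ε = 1 ∨ ε = -1 → |Sa + ε * Sb| ≤ Z + ε * Sc := by
    intro ε hε
    have h1 : Sa + ε * Sb = ∑ σ : ι → Bool, (sigmaSet A σ + ε * sigmaSet B σ) * W σ := by
      rw [hSa, hSb, Finset.mul_sum, ← Finset.sum_add_distrib]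
      exact Finset.sum_congr rfl fun σ _ => by ring
    have h2 : Z + ε * Sc =
        ∑ σ : ι → Bool, (1 + ε * (sigmaSet A σ * sigmaSet B σ)) * W σ := by
      rw [hZdef, hSc, Finset.mul_sum, ← Finset.sum_add_distrib]
      exact Finset.sum_congr rfl fun σ _ => by ring
    rw [h1, h2]
    calc |∑ σ : ι → Bool, (sigmaSet A σ + ε * sigmaSet B σ) * W σ|
        ≤ ∑ σ : ι → Bool, |(sigmaSet A σ + ε * sigmaSet B σ) * W σ| :=
          Finset.abs_sum_le_sum_abs _ _
      _ ≤ ∑ σ : ι → Bool, (1 + ε * (sigmaSet A σ * sigmaSet B σ)) * W σ := by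
          refine Finset.sum_le_sum fun σ _ => ?_
          rw [abs_mul, abs_of_pos (hWpos σ)]
          have hw := (hWpos σ).le
          rcases sigmaSet_eq_or A σ with ha | ha <;>
            rcases sigmaSet_eq_or B σ with hb | hb <;>
              rcases hε with hε | hε <;>
                simp [ha, hb, hε] <;> norm_num
  have h1 := habs 1 (Or.inl rfl)
  have h2 := habs (-1) (Or.inr rfl)
  simp only [one_mul, neg_one_mul] at h1 h2
  have k1 : (Sa + Sb) ^ 2 ≤ (Z + Sc) ^ 2 := by
    have := abs_le.mp h1
    nlinarith [this.1, this.2]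
  have k2 : (Sa - Sb) ^ 2 ≤ (Z - Sc) ^ 2 := by
    have := abs_le.mp h2
    nlinarith [this.1, this.2]
  have key : Sa ^ 2 + Sb ^ 2 ≤ Z ^ 2 + Sc ^ 2 := by nlinarith [k1, k2]
  rw [hOA, hOB, hOC]
  have hZ2 : (0:ℝ) < Z ^ 2 := by positivity
  rw [div_pow, div_pow, div_pow]
  rw [show (1 : ℝ) - Sc ^ 2 / Z ^ 2 = (Z ^ 2 - Sc ^ 2) / Z ^ 2 by field_simp,
      show (1 : ℝ) - Sa ^ 2 / Z ^ 2 = (Z ^ 2 - Sa ^ 2) / Z ^ 2 by field_simp,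
      show (1 : ℝ) - Sb ^ 2 / Z ^ 2 = (Z ^ 2 - Sb ^ 2) / Z ^ 2 by field_simp,
      ← add_div, div_le_div_iff₀ hZ2 hZ2]
  nlinarith [key, hZ2]

/-- Core 1D estimate: the Gaussian integral of the "sech²"-shaped function
`x ↦ 1 - ((Wp e^{βx} - Wm e^{-βx})/(Wp e^{βx} + Wm e^{-βx}))²` is at most
`√(2/π)/(β Ξ)`. -/
lemma oneD_core {Wp Wm β : ℝ} (hWp : 0 < Wp) (hWm : 0 < Wm) (hβ : 0 < β)
    (Ξ : ℝ≥0) (hΞ : 0 < Ξ) :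
    ∫ x, (1 - ((Wp * Real.exp (β * x) - Wm * Real.exp (-(β * x))) /
        (Wp * Real.exp (β * x) + Wm * Real.exp (-(β * x)))) ^ 2)
      ∂(gaussianReal 0 (Ξ ^ 2)) ≤ Real.sqrt (2 / π) * (1 / β) * (1 / (Ξ : ℝ)) := by
  set N : ℝ → ℝ := fun x => Wp * Real.exp (β * x) - Wm * Real.exp (-(β * x)) with hN
  set D : ℝ → ℝ := fun x => Wp * Real.exp (β * x) + Wm * Real.exp (-(β * x)) with hD
  have hDpos : ∀ x, 0 < D x := fun x => by positivity
  have hND : ∀ x, |N x| ≤ D x := by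
    intro x
    rw [abs_le]
    constructor <;> simp only [hN, hD] <;>
      nlinarith [Real.exp_pos (β * x), Real.exp_pos (-(β * x)), hWp.le, hWm.le]
  set f : ℝ → ℝ := fun x => 1 - (N x / D x) ^ 2 with hf
  have hf_nonneg : ∀ x, 0 ≤ f x := by
    intro x
    have h1 : (N x / D x) ^ 2 ≤ 1 := by
      rw [sq_le_one_iff_abs_le_one, abs_div, abs_of_pos (hDpos x), div_le_one (hDpos x)]
      exact hND x
    simp only [hf]; linarith
  have hf_le_one : ∀ x, f x ≤ 1 := by
    intro x; simp only [hf]; nlinarith [sq_nonneg (N x / D x)]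
  have hNc : Continuous N := by fun_prop
  have hDc : Continuous D := by fun_prop
  have hfc : Continuous f := by
    apply Continuous.sub continuous_const
    exact ((hNc.div hDc fun x => (hDpos x).ne').pow 2)
  set F : ℝ → ℝ := fun x => N x / (β * D x) with hF
  have hderiv : ∀ x, HasDerivAt F (f x) x := by
    intro x
    have hN' : HasDerivAt N (β * D x) x := by
      have h1 : HasDerivAt (fun x : ℝ => Wp * Real.exp (β * x)) (Wp * (Real.exp (β * x) * β)) x :=
        ((Real.hasDerivAt_exp (β * x)).comp x
          (by simpa using (hasDerivAt_id x).const_mul β)).const_mul Wp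
      have h2 : HasDerivAt (fun x : ℝ => Wm * Real.exp (-(β * x)))
          (Wm * (Real.exp (-(β * x)) * (-β))) x :=
        by
          have hi : HasDerivAt (fun y : ℝ => -(β * y)) (-β) x :=
            ((hasDerivAt_id' x).const_mul β).neg.congr_deriv (by ring)
          exact ((Real.hasDerivAt_exp (-(β * x))).comp x hi).const_mul Wm
      have := h1.sub h2
      refine this.congr_deriv ?_
      simp only [hD]; ring
    have hD' : HasDerivAt (fun y => β * D y) (β * (β * N x)) x := by
      have h1 : HasDerivAt (fun x : ℝ => Wp * Real.exp (β * x)) (Wp * (Real.exp (β * x) * β)) x :=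
        ((Real.hasDerivAt_exp (β * x)).comp x
          (by simpa using (hasDerivAt_id x).const_mul β)).const_mul Wp
      have h2 : HasDerivAt (fun x : ℝ => Wm * Real.exp (-(β * x)))
          (Wm * (Real.exp (-(β * x)) * (-β))) x :=
        by
          have hi : HasDerivAt (fun y : ℝ => -(β * y)) (-β) x :=
            ((hasDerivAt_id' x).const_mul β).neg.congr_deriv (by ring)
          exact ((Real.hasDerivAt_exp (-(β * x))).comp x hi).const_mul Wm
      have : HasDerivAt D (β * N x) x := by
        have := h1.add h2
        refine this.congr_deriv ?_
        simp only [hN]; ring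
      exact this.const_mul β
    have hdiv := hN'.div hD' (by positivity : β * D x ≠ 0)
    have key : ∀ Nv Dv : ℝ, Dv ≠ 0 →
        (β * Dv * (β * Dv) - Nv * (β * (β * Nv))) / (β * Dv) ^ 2 = 1 - (Nv / Dv) ^ 2 := by
      intro Nv Dv hDv
      field_simp
    rw [key (N x) (D x) (hDpos x).ne'] at hdiv
    exact hdiv
  have hFbound : ∀ x, |F x| ≤ 1 / β := by
    intro x
    rw [hF, abs_div, abs_of_pos (by positivity : 0 < β * D x),
      div_le_div_iff₀ (by positivity) hβ]
    calc |N x| * β ≤ D x * β := by nlinarith [hND x, hβ]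
      _ = 1 * (β * D x) := by ring
  have hinterval : ∀ a b : ℝ, ∫ x in a..b, f x = F b - F a := fun a b =>
    intervalIntegral.integral_eq_sub_of_hasDerivAt (fun x _ => hderiv x)
      (hfc.intervalIntegrable a b)
  have hbound : ∀ a b : ℝ, ∫ x in a..b, f x ≤ 2 / β := by
    intro a b
    rw [hinterval]
    have h1 := abs_le.mp (hFbound b)
    have h2 := abs_le.mp (hFbound a)
    have : (2:ℝ)/β = 1/β + 1/β := by ring
    linarith [h1.2, h2.1]
  have hInt : Integrable f (volume : Measure ℝ) := by
    refine integrable_of_intervalIntegral_norm_bounded (μ := volume)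
      (a := fun n : ℕ => -(n:ℝ)) (b := fun n : ℕ => (n:ℝ)) (l := atTop) (2/β)
      (fun n => (hfc.integrableOn_Icc).mono_set Set.Ioc_subset_Icc_self) ?_ ?_ ?_
    · exact tendsto_neg_atBot_iff.mpr tendsto_natCast_atTop_atTop
    · exact tendsto_natCast_atTop_atTop
    · filter_upwards with n
      have : ∀ x, ‖f x‖ = f x := fun x => Real.norm_of_nonneg (hf_nonneg x)
      calc (∫ x in -(n:ℝ)..(n:ℝ), ‖f x‖) = ∫ x in -(n:ℝ)..(n:ℝ), f x := by
            simp_rw [this]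
        _ ≤ 2/β := hbound _ _
  have hIntVal : ∫ x, f x ∂(volume : Measure ℝ) ≤ 2 / β := by
    have htend := intervalIntegral_tendsto_integral (μ := volume) hInt
      (tendsto_neg_atBot_iff.mpr tendsto_natCast_atTop_atTop)
      (tendsto_natCast_atTop_atTop (R := ℝ))
    exact le_of_tendsto htend (Filter.Eventually.of_forall fun n => hbound _ _)
  have hv : (Ξ ^ 2 : ℝ≥0) ≠ 0 := pow_ne_zero _ hΞ.ne'
  set pdfN : ℝ → ℝ≥0 := fun x => (gaussianPDFReal 0 (Ξ ^ 2) x).toNNReal with hpdfN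
  have hpdfN_meas : Measurable pdfN := (measurable_gaussianPDFReal 0 (Ξ ^ 2)).real_toNNReal
  have hmap : gaussianReal 0 (Ξ ^ 2) = volume.withDensity (fun x => (pdfN x : ℝ≥0∞)) := by
    rw [gaussianReal_of_var_ne_zero 0 hv]
    rfl
  have hcoe : ∀ x, (pdfN x : ℝ) = gaussianPDFReal 0 (Ξ ^ 2) x :=
    fun x => Real.coe_toNNReal _ (gaussianPDFReal_nonneg _ _ _)
  set c : ℝ := 1 / (Real.sqrt (2 * π) * (Ξ : ℝ)) with hc
  have hcpos : 0 < c := by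
    rw [hc]
    have h2π : (0:ℝ) < Real.sqrt (2 * π) := Real.sqrt_pos.mpr (by positivity)
    positivity
  have hpdf_le : ∀ x, gaussianPDFReal 0 (Ξ ^ 2) x ≤ c := by
    intro x
    rw [gaussianPDFReal]
    have h1 : Real.exp (-(x - 0) ^ 2 / (2 * ((Ξ:ℝ)^2))) ≤ 1 := by
      rw [Real.exp_le_one_iff]
      apply div_nonpos_of_nonpos_of_nonneg
      · simp [sq_nonneg]
      · positivity
    have hsqrt : Real.sqrt (2 * π * ((Ξ^2 : ℝ≥0) : ℝ)) = Real.sqrt (2 * π) * (Ξ : ℝ) := by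
      push_cast
      rw [Real.sqrt_mul (by positivity), Real.sqrt_sq (by positivity)]
    have hcast : ((Ξ^2 : ℝ≥0) : ℝ) = ((Ξ:ℝ))^2 := by push_cast; ring
    calc (Real.sqrt (2 * π * ((Ξ^2 : ℝ≥0) : ℝ)))⁻¹ *
          Real.exp (-(x - 0) ^ 2 / (2 * ((Ξ^2 : ℝ≥0) : ℝ)))
        ≤ (Real.sqrt (2 * π * ((Ξ^2 : ℝ≥0) : ℝ)))⁻¹ * 1 := by
          apply mul_le_mul_of_nonneg_left _ (by positivity)
          rw [hcast]
          exact h1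
      _ = c := by
          rw [mul_one, hsqrt, hc, one_div, mul_comm]
  have hIc : Integrable (fun x => c * f x) (volume : Measure ℝ) := hInt.const_mul _
  have hpt : ∀ x, (pdfN x : ℝ) * f x ≤ c * f x := by
    intro x
    apply mul_le_mul_of_nonneg_right _ (hf_nonneg x)
    rw [hcoe x]
    exact hpdf_le x
  have hI1 : Integrable (fun x => (pdfN x : ℝ) * f x) (volume : Measure ℝ) := by
    refine hIc.mono' ((hpdfN_meas.coe_nnreal_real.mul hfc.measurable).aestronglyMeasurable) ?_
    filter_upwards with x
    rw [Real.norm_eq_abs, abs_of_nonneg (mul_nonneg (pdfN x).coe_nonneg (hf_nonneg x))]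
    exact hpt x
  have harith : c * (2 / β) = Real.sqrt (2 / π) * (1 / β) * (1 / (Ξ : ℝ)) := by
    have hs2 : Real.sqrt 2 * Real.sqrt 2 = 2 := Real.mul_self_sqrt (by norm_num)
    have hsπ : (0:ℝ) < Real.sqrt π := Real.sqrt_pos.mpr Real.pi_pos
    have hs2' : (0:ℝ) < Real.sqrt 2 := Real.sqrt_pos.mpr (by norm_num)
    rw [hc, Real.sqrt_div (by norm_num : (0:ℝ) ≤ 2) π, Real.sqrt_mul (by norm_num : (0:ℝ) ≤ 2) π]
    have hΞ' : (0:ℝ) < (Ξ : ℝ) := hΞ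
    field_simp
    have hs2sq : Real.sqrt 2 ^ 2 = 2 := Real.sq_sqrt (by norm_num)
    linear_combination (-1 : ℝ) * hs2sq
  calc ∫ x, f x ∂(gaussianReal 0 (Ξ ^ 2))
      = ∫ x, pdfN x • f x := by rw [hmap, integral_withDensity_eq_integral_smul hpdfN_meas]
    _ = ∫ x, (pdfN x : ℝ) * f x := by simp_rw [NNReal.smul_def, smul_eq_mul]
    _ ≤ ∫ x, c * f x := integral_mono hI1 hIc hpt
    _ = c * ∫ x, f x := by rw [integral_const_mul]
    _ ≤ c * (2 / β) := mul_le_mul_of_nonneg_left hIntVal hcpos.le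
    _ = Real.sqrt (2 / π) * (1 / β) * (1 / (Ξ : ℝ)) := harith

/-- Weight of the `σ_A = +1` sector, built from the couplings other than `J_A`. -/
def Wplus (β : ℝ) (A : Finset ι) (j : Finset ι → ℝ) : ℝ :=
  ∑ σ ∈ Finset.univ.filter (fun σ : ι → Bool => sigmaSet A σ = 1),
    Real.exp (β * ∑ D ∈ Finset.univ.erase A, j D * sigmaSet D σ)

/-- Weight of the `σ_A = -1` sector. -/
def Wminus (β : ℝ) (A : Finset ι) (j : Finset ι → ℝ) : ℝ :=
  ∑ σ ∈ Finset.univ.filter (fun σ : ι → Bool => ¬ sigmaSet A σ = 1),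
    Real.exp (β * ∑ D ∈ Finset.univ.erase A, j D * sigmaSet D σ)

lemma Wplus_pos (β : ℝ) (A : Finset ι) (j : Finset ι → ℝ) : 0 < Wplus β A j := by
  classical
  apply Finset.sum_pos (fun σ _ => Real.exp_pos _)
  refine ⟨fun _ => true, ?_⟩
  simp only [Finset.mem_filter, Finset.mem_univ, true_and]
  exact Finset.prod_eq_one fun i _ => by simp [spinVal]

lemma Wminus_pos (β : ℝ) {A : Finset ι} (hA : A.Nonempty) (j : Finset ι → ℝ) :
    0 < Wminus β A j := by
  classical
  apply Finset.sum_pos (fun σ _ => Real.exp_pos _)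
  obtain ⟨i, hi⟩ := hA
  refine ⟨Function.update (fun _ => true) i false, ?_⟩
  simp only [Finset.mem_filter, Finset.mem_univ, true_and]
  have : sigmaSet A (Function.update (fun _ => true) i false) = -1 := by
    unfold sigmaSet
    rw [← Finset.mul_prod_erase A _ hi]
    have h1 : spinVal (Function.update (fun _ => true) i false i) = -1 := by
      simp [Function.update_self, spinVal]
    have h2 : ∀ k ∈ A.erase i, spinVal (Function.update (fun _ => true) i false k) = 1 := by
      intro k hk
      have hki : k ≠ i := Finset.ne_of_mem_erase hk
      simp [Function.update_of_ne hki, spinVal]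
    rw [h1, Finset.prod_congr rfl h2]
    simp
  rw [this]; norm_num

lemma Wplus_congr (β : ℝ) (A : Finset ι) {j j' : Finset ι → ℝ}
    (h : ∀ D, D ≠ A → j D = j' D) : Wplus β A j = Wplus β A j' := by
  unfold Wplus
  refine Finset.sum_congr rfl fun σ _ => ?_
  congr 1
  congr 1
  exact Finset.sum_congr rfl fun D hD => by rw [h D (Finset.ne_of_mem_erase hD)]

lemma Wminus_congr (β : ℝ) (A : Finset ι) {j j' : Finset ι → ℝ}
    (h : ∀ D, D ≠ A → j D = j' D) : Wminus β A j = Wminus β A j' := by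
  unfold Wminus
  refine Finset.sum_congr rfl fun σ _ => ?_
  congr 1
  congr 1
  exact Finset.sum_congr rfl fun D hD => by rw [h D (Finset.ne_of_mem_erase hD)]

/-- Representation of `ω_A` as a function of the coupling `J_A`. -/
lemma omegaSet_rep (β : ℝ) (A : Finset ι) (j : Finset ι → ℝ) :
    omegaSet β j A =
      (Wplus β A j * Real.exp (β * j A) - Wminus β A j * Real.exp (-(β * j A))) /
      (Wplus β A j * Real.exp (β * j A) + Wminus β A j * Real.exp (-(β * j A))) := by
  classical
  have hexp : ∀ σ : ι → Bool, Real.exp (-β * glassH j σ) =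
      Real.exp (β * j A * sigmaSet A σ) *
        Real.exp (β * ∑ D ∈ Finset.univ.erase A, j D * sigmaSet D σ) := by
    intro σ
    rw [← Real.exp_add]
    congr 1
    rw [glassH]
    have hsum : (∑ D : Finset ι, j D * sigmaSet D σ) =
        j A * sigmaSet A σ + ∑ D ∈ Finset.univ.erase A, j D * sigmaSet D σ :=
      (Finset.add_sum_erase _ _ (Finset.mem_univ A)).symm
    rw [hsum]
    ring
  have hnum : (∑ σ : ι → Bool, sigmaSet A σ * Real.exp (-β * glassH j σ)) =
      Wplus β A j * Real.exp (β * j A) - Wminus β A j * Real.exp (-(β * j A)) := by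
    rw [← Finset.sum_filter_add_sum_filter_not Finset.univ
      (fun σ : ι → Bool => sigmaSet A σ = 1)]
    rw [Wplus, Wminus, Finset.sum_mul, Finset.sum_mul]
    rw [sub_eq_add_neg, ← Finset.sum_neg_distrib]
    congr 1
    · refine Finset.sum_congr rfl fun σ hσ => ?_
      have hσ1 : sigmaSet A σ = 1 := (Finset.mem_filter.mp hσ).2
      rw [hexp σ, hσ1]
      ring_nf
    · refine Finset.sum_congr rfl fun σ hσ => ?_
      have hσ1 : sigmaSet A σ = -1 := by
        rcases sigmaSet_eq_or A σ with h | h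
        · exact absurd h (Finset.mem_filter.mp hσ).2
        · exact h
      rw [hexp σ, hσ1]
      ring_nf
  have hden : (∑ σ : ι → Bool, Real.exp (-β * glassH j σ)) =
      Wplus β A j * Real.exp (β * j A) + Wminus β A j * Real.exp (-(β * j A)) := by
    rw [← Finset.sum_filter_add_sum_filter_not Finset.univ
      (fun σ : ι → Bool => sigmaSet A σ = 1)]
    rw [Wplus, Wminus, Finset.sum_mul, Finset.sum_mul]
    congr 1
    · refine Finset.sum_congr rfl fun σ hσ => ?_
      have hσ1 : sigmaSet A σ = 1 := (Finset.mem_filter.mp hσ).2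
      rw [hexp σ, hσ1]
      ring_nf
    · refine Finset.sum_congr rfl fun σ hσ => ?_
      have hσ1 : sigmaSet A σ = -1 := by
        rcases sigmaSet_eq_or A σ with h | h
        · exact absurd h (Finset.mem_filter.mp hσ).2
        · exact h
      rw [hexp σ, hσ1]
      ring_nf
  rw [omegaSet, gibbs, hnum, hden]

/-- `ω_∅ = 1`. -/
lemma omegaSet_empty (β : ℝ) (j : Finset ι → ℝ) : omegaSet β j (∅ : Finset ι) = 1 := by
  rw [omegaSet, gibbs]
  have h : ∀ σ : ι → Bool, sigmaSet (∅ : Finset ι) σ = 1 := fun σ => by simp [sigmaSet]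
  simp_rw [h, one_mul]
  apply div_self
  exact ne_of_gt (Finset.sum_pos (fun σ _ => Real.exp_pos _) Finset.univ_nonempty)

lemma measurable_omega (β : ℝ) (C : Finset ι) {Ω : Type*} [MeasurableSpace Ω]
    {J : Ω → Finset ι → ℝ} (hJ : ∀ D, Measurable fun ω => J ω D) :
    Measurable fun ω => omegaSet β (J ω) C := by
  unfold omegaSet gibbs glassH
  apply Measurable.div
  · apply Finset.measurable_sum
    intro σ _
    apply Measurable.mul measurable_const
    apply Measurable.exp
    apply Measurable.const_mul
    apply Measurable.neg
    apply Finset.measurable_sum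
    intro D _
    exact (hJ D).mul_const _
  · apply Finset.measurable_sum
    intro σ _
    apply Measurable.exp
    apply Measurable.const_mul
    apply Measurable.neg
    apply Finset.measurable_sum
    intro D _
    exact (hJ D).mul_const _

/-- Single-set expectation bound: `E[1 - ω_A²] ≤ √(2/π)/(β Ξ_A)`. -/
lemma expectation_bound {Ω : Type*} [MeasurableSpace Ω] (μ : Measure Ω)
    (J : Ω → Finset ι → ℝ) (Ξ : Finset ι → ℝ≥0) (hJ : IsGaussianCouplings μ J Ξ)
    (A : Finset ι) (hΞA : 0 < Ξ A) {β : ℝ} (hβ : 0 < β) :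
    ∫ ω, (1 - omegaSet β (J ω) A ^ 2) ∂μ ≤
      Real.sqrt (2 / π) * (1 / β) * (1 / (Ξ A : ℝ)) := by
  classical
  haveI := hJ.isProb
  by_cases hA : A = ∅
  · subst hA
    simp only [omegaSet_empty, one_pow, sub_self, integral_zero]
    positivity
  have hAne : A.Nonempty := Finset.nonempty_iff_ne_empty.mpr hA
  set T : Finset (Finset ι) := Finset.univ.erase A with hT
  set X : Ω → ℝ := fun ω => J ω A with hX
  set Y : Ω → ({x // x ∈ T} → ℝ) := fun ω D => J ω D.1 with hY
  have hXmeas : Measurable X := hJ.meas A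
  have hYmeas : Measurable Y := measurable_pi_lambda _ fun D => hJ.meas D.1
  have hdisj : Disjoint ({A} : Finset (Finset ι)) T := by
    simp only [hT, Finset.disjoint_singleton_left, Finset.mem_erase]
    tauto
  have hfin := hJ.indep.indepFun_finset {A} T hdisj hJ.meas
  have hindep : IndepFun X Y μ := by
    have heval : Measurable fun v : ({x // x ∈ ({A} : Finset (Finset ι))} → ℝ) =>
        v ⟨A, Finset.mem_singleton_self A⟩ := measurable_pi_apply _
    exact hfin.comp heval measurable_id
  set recomb : ℝ × ({x // x ∈ T} → ℝ) → (Finset ι → ℝ) :=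
    fun p D => if h : D = A then p.1 else p.2 ⟨D, by
      simp only [hT, Finset.mem_erase, Finset.mem_univ, and_true]; exact h⟩ with hrecomb
  have hrecomb_meas : Measurable recomb := by
    apply measurable_pi_lambda
    intro D
    by_cases h : D = A
    · simp only [hrecomb, h, dif_pos]
      exact measurable_fst
    · simp only [hrecomb, dif_neg h]
      exact (measurable_pi_apply _).comp measurable_snd
  have hJrec : ∀ ω, recomb (X ω, Y ω) = J ω := by
    intro ω
    funext D
    by_cases h : D = A
    · subst h; simp [hrecomb, hX]
    · simp [hrecomb, dif_neg h, hY]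
  set G : ℝ × ({x // x ∈ T} → ℝ) → ℝ := fun p => 1 - omegaSet β (recomb p) A ^ 2 with hG
  have hGmeas : Measurable G := by
    have := (measurable_omega (ι := ι) β A
      (J := fun (p : ℝ × ({x // x ∈ T} → ℝ)) => recomb p)
      (fun D => (measurable_pi_apply D).comp hrecomb_meas))
    exact (measurable_const.sub (this.pow_const 2))
  have hGbound : ∀ p, ‖G p‖ ≤ 1 := by
    intro p
    have h2 : omegaSet β (recomb p) A ^ 2 ≤ 1 :=
      (sq_le_one_iff_abs_le_one _).mpr (abs_omegaSet_le_one β (recomb p) A)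
    have h3 : 0 ≤ omegaSet β (recomb p) A ^ 2 := sq_nonneg _
    rw [Real.norm_eq_abs, abs_le]
    constructor <;> simp only [hG] <;> nlinarith
  have hmap : μ.map (fun ω => (X ω, Y ω)) = (μ.map X).prod (μ.map Y) :=
    (indepFun_iff_map_prod_eq_prod_map_map hXmeas.aemeasurable hYmeas.aemeasurable).mp hindep
  have hlawX : μ.map X = gaussianReal 0 (Ξ A ^ 2) := hJ.law A
  set ν := μ.map Y with hν
  haveI hνP : IsProbabilityMeasure ν := Measure.isProbabilityMeasure_map hYmeas.aemeasurable
  have hpairmeas : Measurable fun ω => (X ω, Y ω) := hXmeas.prodMk hYmeas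
  set K : ℝ := Real.sqrt (2 / π) * (1 / β) * (1 / (Ξ A : ℝ)) with hK
  have step1 : ∫ ω, (1 - omegaSet β (J ω) A ^ 2) ∂μ = ∫ ω, G (X ω, Y ω) ∂μ := by
    refine integral_congr_ae (Eventually.of_forall fun ω => ?_)
    simp only [hG, hJrec ω]
  have step2 : ∫ ω, G (X ω, Y ω) ∂μ = ∫ p, G p ∂((gaussianReal 0 (Ξ A ^ 2)).prod ν) := by
    rw [← hlawX, hν, ← hmap]
    exact (integral_map hpairmeas.aemeasurable hGmeas.aestronglyMeasurable).symm
  have hGint : Integrable G ((gaussianReal 0 (Ξ A ^ 2)).prod ν) :=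
    Integrable.mono' (integrable_const 1) hGmeas.aestronglyMeasurable
      (Eventually.of_forall hGbound)
  have hinner : ∀ y, ∫ x, G (x, y) ∂(gaussianReal 0 (Ξ A ^ 2)) ≤ K := by
    intro y
    set j0 := recomb (0, y) with hj0
    set Wp := Wplus β A j0 with hWp0
    set Wm := Wminus β A j0 with hWm0
    have hcongr : ∀ x : ℝ, ∀ D, D ≠ A → recomb (x, y) D = j0 D := by
      intro x D hD
      simp only [hrecomb, hj0, dif_neg hD]
    have hcoord : ∀ x : ℝ, recomb (x, y) A = x := by
      intro x
      simp only [hrecomb, dif_pos]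
    have hGeq : ∀ x : ℝ, G (x, y) =
        1 - ((Wp * Real.exp (β * x) - Wm * Real.exp (-(β * x))) /
          (Wp * Real.exp (β * x) + Wm * Real.exp (-(β * x)))) ^ 2 := by
      intro x
      simp only [hG]
      rw [omegaSet_rep β A (recomb (x, y)),
        Wplus_congr β A (hcongr x), Wminus_congr β A (hcongr x), hcoord x]
    calc ∫ x, G (x, y) ∂(gaussianReal 0 (Ξ A ^ 2))
        = ∫ x, (1 - ((Wp * Real.exp (β * x) - Wm * Real.exp (-(β * x))) /
            (Wp * Real.exp (β * x) + Wm * Real.exp (-(β * x)))) ^ 2)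
            ∂(gaussianReal 0 (Ξ A ^ 2)) := by
          exact integral_congr_ae (Eventually.of_forall fun x => hGeq x)
      _ ≤ K := oneD_core (Wplus_pos β A j0) (Wminus_pos β hAne j0) hβ (Ξ A) hΞA
  calc ∫ ω, (1 - omegaSet β (J ω) A ^ 2) ∂μ
      = ∫ p, G p ∂((gaussianReal 0 (Ξ A ^ 2)).prod ν) := step1.trans step2
    _ = ∫ y, (∫ x, G (x, y) ∂(gaussianReal 0 (Ξ A ^ 2))) ∂ν := integral_prod_symm G hGint
    _ ≤ ∫ _, K ∂ν := by
        refine integral_mono hGint.integral_prod_right (integrable_const K) fun y => hinner y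
    _ = K := by simp [measure_univ]

end Aux

/-- **General local order bound for the Gaussian spin-glass model.**
For any two subsets `A, B ⊆ Λ` with `Ξ_A > 0`, `Ξ_B > 0`, and any `β > 0`,
`E[ω_{A·B}²] ≥ 1 - (1/Ξ_A + 1/Ξ_B) √(2/π) (1/β) - (1/(√(2π) Ξ_A² Ξ_B)) (1/β³)`,
where `A·B = (A ∪ B) \ (A ∩ B)` is the symmetric difference; the bound does not
depend on the volume of `Λ` nor on the distance between `A` and `B`. -/
theorem general_local_order_bound
    {Ω : Type*} [MeasurableSpace Ω] (μ : Measure Ω)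
    (J : Ω → Finset ι → ℝ) (Ξ : Finset ι → ℝ≥0)
    (hJ : IsGaussianCouplings μ J Ξ)
    (A B : Finset ι) (hΞA : 0 < Ξ A) (hΞB : 0 < Ξ B) (β : ℝ) (hβ : 0 < β) :
    ∫ ω, (omegaSet β (J ω) ((A ∪ B) \ (A ∩ B))) ^ 2 ∂μ ≥
      1 - (1 / (Ξ A : ℝ) + 1 / (Ξ B : ℝ)) * Real.sqrt (2 / π) * (1 / β)
        - (1 / (Real.sqrt (2 * π) * (Ξ A : ℝ) ^ 2 * (Ξ B : ℝ))) * (1 / β ^ 3) := by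
  classical
  haveI := hJ.isProb
  set C : Finset ι := (A ∪ B) \ (A ∩ B) with hC
  have hmeas : ∀ D : Finset ι, Measurable fun ω => omegaSet β (J ω) D :=
    fun D => measurable_omega β D hJ.meas
  have hboundfun : ∀ (D : Finset ι) (ω : Ω), ‖1 - omegaSet β (J ω) D ^ 2‖ ≤ 1 := by
    intro D ω
    have h2 : omegaSet β (J ω) D ^ 2 ≤ 1 :=
      (sq_le_one_iff_abs_le_one _).mpr (abs_omegaSet_le_one β (J ω) D)
    have h3 : 0 ≤ omegaSet β (J ω) D ^ 2 := sq_nonneg _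
    rw [Real.norm_eq_abs, abs_le]
    constructor <;> nlinarith
  have hint : ∀ D : Finset ι, Integrable (fun ω => 1 - omegaSet β (J ω) D ^ 2) μ := by
    intro D
    exact Integrable.mono' (integrable_const 1)
      ((measurable_const.sub ((hmeas D).pow_const 2)).aestronglyMeasurable)
      (Filter.Eventually.of_forall (hboundfun D))
  have hintsq : ∀ D : Finset ι, Integrable (fun ω => omegaSet β (J ω) D ^ 2) μ := by
    intro D
    refine Integrable.mono' (integrable_const 1)
      (((hmeas D).pow_const 2).aestronglyMeasurable)
      (Filter.Eventually.of_forall fun ω => ?_)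
    have h2 : omegaSet β (J ω) D ^ 2 ≤ 1 :=
      (sq_le_one_iff_abs_le_one _).mpr (abs_omegaSet_le_one β (J ω) D)
    have h3 : 0 ≤ omegaSet β (J ω) D ^ 2 := sq_nonneg _
    rw [Real.norm_eq_abs, abs_le]
    constructor <;> nlinarith
  have hsplit : ∫ ω, (1 - omegaSet β (J ω) C ^ 2) ∂μ =
      1 - ∫ ω, omegaSet β (J ω) C ^ 2 ∂μ := by
    rw [integral_sub (integrable_const 1) (hintsq C)]
    simp [measure_univ]
  have hmono : ∫ ω, (1 - omegaSet β (J ω) C ^ 2) ∂μ ≤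
      ∫ ω, ((1 - omegaSet β (J ω) A ^ 2) + (1 - omegaSet β (J ω) B ^ 2)) ∂μ := by
    refine integral_mono (hint C) ((hint A).add (hint B)) fun ω => ?_
    exact pointwise_bound β (J ω) A B
  have hadd : ∫ ω, ((1 - omegaSet β (J ω) A ^ 2) + (1 - omegaSet β (J ω) B ^ 2)) ∂μ =
      (∫ ω, (1 - omegaSet β (J ω) A ^ 2) ∂μ) + ∫ ω, (1 - omegaSet β (J ω) B ^ 2) ∂μ :=
    integral_add (hint A) (hint B)
  have hKA := expectation_bound μ J Ξ hJ A hΞA hβ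
  have hKB := expectation_bound μ J Ξ hJ B hΞB hβ
  have hthird : 0 ≤ (1 / (Real.sqrt (2 * π) * (Ξ A : ℝ) ^ 2 * (Ξ B : ℝ))) * (1 / β ^ 3) := by
    have h2π : (0:ℝ) ≤ Real.sqrt (2 * π) := Real.sqrt_nonneg _
    positivity
  have harith : (1 / (Ξ A : ℝ) + 1 / (Ξ B : ℝ)) * Real.sqrt (2 / π) * (1 / β) =
      Real.sqrt (2 / π) * (1 / β) * (1 / (Ξ A : ℝ)) +
        Real.sqrt (2 / π) * (1 / β) * (1 / (Ξ B : ℝ)) := by ring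
  rw [ge_iff_le]
  have : ∫ ω, omegaSet β (J ω) C ^ 2 ∂μ =
      1 - ∫ ω, (1 - omegaSet β (J ω) C ^ 2) ∂μ := by linarith [hsplit]
  rw [this]
  linarith [hmono, hadd, hKA, hKB, hthird, harith.le]


end
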